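/- If R is an irreducible reduced root system and φ: V* → V, φ∨: V → V* are the maps defined by φ(α∨) = α for short coroots and φ∨(α) = α∨ for short roots, then the compositions φ∘φ∨: V → V and φ∨∘φ: V* → V* are both multiplication by d_α, the square-length of the coroot of a short root α (equivalently, 1 if R is simply laced, and the square-length of a long root otherwise). -/

import Mathlib

open Module

/-- A reduced root system `R` in a real vector space `V`, together with the
`Aut(R)`-invariant inner products on `V` and on `V* = Dual ℝ V`. -/
structure RootSystemData (V : Type) [AddCommGroup V] [Module ℝ V] : Type where
  /-- the (finite) set of roots -/
  roots : Finset V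
  /-- the coroot `α∨ ∈ V*` attached to a root `α` -/
  coroot : V → Module.Dual ℝ V
  span_eq_top : Submodule.span ℝ (roots : Set V) = ⊤
  root_ne_zero : ∀ α ∈ roots, α ≠ (0 : V)
  coroot_self : ∀ α ∈ roots, coroot α α = 2
  reflect_mem : ∀ α ∈ roots, ∀ β ∈ roots, β - coroot α β • α ∈ roots
  crystallographic : ∀ α ∈ roots, ∀ β ∈ roots, ∃ n : ℤ, coroot α β = (n : ℝ)
  reduced : ∀ α ∈ roots, ∀ t : ℝ, t • α ∈ roots → t = 1 ∨ t = -1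
  /-- the `Aut(R)`-invariant inner product on `V` -/
  B : V →ₗ[ℝ] V →ₗ[ℝ] ℝ
  B_symm : ∀ x y, B x y = B y x
  B_pos : ∀ x, x ≠ 0 → 0 < B x x
  B_invariant : ∀ σ : V ≃ₗ[ℝ] V, (∀ α ∈ roots, σ α ∈ roots) →
    ∀ α ∈ roots, ∀ β ∈ roots, B (σ α) (σ β) = B α β
  coroot_eq : ∀ α ∈ roots, ∀ x : V, coroot α x = 2 * B α x / B α α
  /-- the `Aut(R)`-invariant inner product on `V*` (for the dual root system `R∨`) -/
  Bd : Module.Dual ℝ V →ₗ[ℝ] Module.Dual ℝ V →ₗ[ℝ] ℝ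
  Bd_symm : ∀ x y, Bd x y = Bd y x
  Bd_pos : ∀ x, x ≠ 0 → 0 < Bd x x
  /-- the coroot of `α∨` in the dual root system `R∨` is evaluation at `α` -/
  dual_coroot_eq : ∀ α ∈ roots, ∀ y : Module.Dual ℝ V,
    y α = 2 * Bd (coroot α) y / Bd (coroot α) (coroot α)

namespace RootSystemData

variable {V : Type} [AddCommGroup V] [Module ℝ V] (D : RootSystemData V)

/-- `x` and `y` lie in the same irreducible component of the root system. -/
def SameComponent (x y : V) : Prop :=
  Relation.ReflTransGen (fun a b => a ∈ D.roots ∧ b ∈ D.roots ∧ D.B a b ≠ 0) x y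

/-- `R` is irreducible. -/
def IsIrreducible : Prop :=
  D.roots.Nonempty ∧ ∀ α ∈ D.roots, ∀ β ∈ D.roots, D.SameComponent α β

/-- `R` is simply laced: all roots have the same length. -/
def IsSimplyLaced : Prop := ∀ α ∈ D.roots, ∀ β ∈ D.roots, D.B α α = D.B β β

/-- `α` is a root that is short within its irreducible component. -/
def ShortRoot (α : V) : Prop :=
  α ∈ D.roots ∧ ∀ β ∈ D.roots, D.SameComponent α β → D.B α α ≤ D.B β β

/-- `α∨` is a coroot that is short within its irreducible component of `R∨`
(equivalently, `α` is a long root of its component). -/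
def ShortCoroot (α : V) : Prop :=
  α ∈ D.roots ∧ ∀ β ∈ D.roots, D.SameComponent α β →
    D.Bd (D.coroot α) (D.coroot α) ≤ D.Bd (D.coroot β) (D.coroot β)

/-- normalization: short roots in every irreducible component have square-length `1`. -/
def NormalizedPrimal : Prop := ∀ α, D.ShortRoot α → D.B α α = 1

/-- normalization: short coroots in every irreducible component have square-length `1`. -/
def NormalizedDual : Prop := ∀ α, D.ShortCoroot α → D.Bd (D.coroot α) (D.coroot α) = 1

/-- the weight lattice `Λ_w ⊆ V`. -/
def weightLattice : Set V := {x | ∀ α ∈ D.roots, ∃ n : ℤ, D.coroot α x = (n : ℝ)}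

/-- the root lattice `Λ_r ⊆ V`. -/
def rootLattice : AddSubgroup V := AddSubgroup.closure (D.roots : Set V)

/-- the coweight lattice `Λ_w∨ ⊆ V*`. -/
def coweightLattice : Set (Module.Dual ℝ V) := {x | ∀ α ∈ D.roots, ∃ n : ℤ, x α = (n : ℝ)}

/-- the coroot lattice `Λ_r∨ ⊆ V*`. -/
def corootLattice : AddSubgroup (Module.Dual ℝ V) :=
  AddSubgroup.closure (D.coroot '' (D.roots : Set V))

end RootSystemData

/-!
Evaluating `β∨(α)` once with `B` and once with `Bd` shows that `|α|² · |α∨|²` takes the same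
value on any two roots that are not orthogonal, hence on all roots of an irreducible `R`; on a
short root, where `|α|² = 1`, this common value is `d_α = |α∨|²`. Pairing `φ∨ (φ y)` with a root
`β` and using both formulas for `β∨` then gives `φ∨ ∘ φ = d_α • id`. Hence `φ` is
injective, so bijective as `dim V* = dim V`, and `φ ∘ φ∨ = d_α • id` follows.
-/

theorem LinearMap.comp_eq_smul_id_of_surjective {R M N : Type*} [CommSemiring R]
    [AddCommMonoid M] [Module R M] [AddCommMonoid N] [Module R N]
    {f : M →ₗ[R] N} {g : N →ₗ[R] M} {c : R} (hf : Function.Surjective f)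
    (h : g.comp f = c • LinearMap.id) : f.comp g = c • LinearMap.id := by
  ext y
  obtain ⟨x, rfl⟩ := hf y
  simpa using congrArg f (LinearMap.congr_fun h x)

theorem LinearMap.injective_of_comp_eq_smul_id {K M N : Type*} [Field K]
    [AddCommGroup M] [Module K M] [AddCommGroup N] [Module K N]
    {f : M →ₗ[K] N} {g : N →ₗ[K] M} {c : K} (hc : c ≠ 0)
    (h : g.comp f = c • LinearMap.id) : Function.Injective f := by
  intro x y hxy
  have hgf : c • x = c • y := by
    simpa using (LinearMap.congr_fun h x).symm.trans
      ((congrArg g hxy).trans (LinearMap.congr_fun h y))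
  exact smul_right_injective M hc hgf

namespace RootSystemData

variable {V : Type} [AddCommGroup V] [Module ℝ V] {D : RootSystemData V}

def lengthProduct (D : RootSystemData V) (α : V) : ℝ :=
  D.B α α * D.Bd (D.coroot α) (D.coroot α)

theorem B_self_pos {α : V} (hα : α ∈ D.roots) : 0 < D.B α α :=
  D.B_pos α (D.root_ne_zero α hα)

theorem coroot_ne_zero {α : V} (hα : α ∈ D.roots) : D.coroot α ≠ 0 := by
  intro h
  simpa [h] using D.coroot_self α hα

theorem Bd_coroot_self_pos {α : V} (hα : α ∈ D.roots) :
    0 < D.Bd (D.coroot α) (D.coroot α) :=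
  D.Bd_pos _ (coroot_ne_zero hα)

theorem two_mul_B_eq_mul_coroot {α : V} (hα : α ∈ D.roots) (x : V) :
    2 * D.B α x = D.B α α * D.coroot α x := by
  rw [D.coroot_eq α hα x, mul_div_cancel₀ _ (B_self_pos hα).ne']

theorem two_mul_Bd_coroot_eq_mul_apply {α : V} (hα : α ∈ D.roots)
    (y : Module.Dual ℝ V) :
    2 * D.Bd (D.coroot α) y = D.Bd (D.coroot α) (D.coroot α) * y α := by
  rw [D.dual_coroot_eq α hα y, mul_div_cancel₀ _ (Bd_coroot_self_pos hα).ne']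

theorem lengthProduct_eq_of_B_ne_zero {α β : V} (hα : α ∈ D.roots) (hβ : β ∈ D.roots)
    (hαβ : D.B α β ≠ 0) : D.lengthProduct α = D.lengthProduct β := by
  have hβα := two_mul_B_eq_mul_coroot hβ α
  have hαβ' := two_mul_B_eq_mul_coroot hα β
  have hβα_d := two_mul_Bd_coroot_eq_mul_apply hα (D.coroot β)
  have hαβ_d := two_mul_Bd_coroot_eq_mul_apply hβ (D.coroot α)
  rw [D.B_symm β α] at hβα
  rw [D.Bd_symm (D.coroot β)] at hαβ_d
  -- multiplied by `β∨(α) α∨(β)`, both sides become `4 B(α,β) Bd(α∨,β∨)`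
  have hpairing : D.coroot β α * D.coroot α β ≠ 0 := by
    refine mul_ne_zero ?_ ?_ <;> rintro h <;> simp [h, hαβ] at hβα hαβ'
  refine mul_right_cancel₀ hpairing ?_
  unfold lengthProduct
  linear_combination (D.Bd (D.coroot β) (D.coroot β) * D.coroot α β) * hβα
    - (D.Bd (D.coroot α) (D.coroot α) * D.coroot β α) * hαβ'
    + 2 * D.B α β * (hαβ_d - hβα_d)

theorem lengthProduct_eq_of_sameComponent {α β : V} (h : D.SameComponent α β) :
    D.lengthProduct α = D.lengthProduct β := by
  induction h with
  | refl => rfl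
  | tail _ hstep ih => exact ih.trans (lengthProduct_eq_of_B_ne_zero hstep.1 hstep.2.1 hstep.2.2)

theorem IsIrreducible.lengthProduct_eq (hirr : D.IsIrreducible) {α β : V}
    (hα : α ∈ D.roots) (hβ : β ∈ D.roots) : D.lengthProduct α = D.lengthProduct β :=
  lengthProduct_eq_of_sameComponent (hirr.2 α hα β hβ)

theorem comp_eq_smul_id_of_lengthProduct_eq {φ : Module.Dual ℝ V →ₗ[ℝ] V}
    (hφ : ∀ x y : Module.Dual ℝ V, x (φ y) = 2 * D.Bd x y) {φv : V →ₗ[ℝ] Module.Dual ℝ V}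
    (hφv : ∀ x y : V, φv x y = 2 * D.B x y) {c : ℝ}
    (hc : ∀ β ∈ D.roots, D.lengthProduct β = c) : φv.comp φ = c • LinearMap.id := by
  ext y : 1
  refine LinearMap.ext_on D.span_eq_top fun β hβ => ?_
  calc φv (φ y) β = 2 * D.B β (φ y) := by rw [hφv, D.B_symm]
    _ = D.B β β * (2 * D.Bd (D.coroot β) y) := by rw [two_mul_B_eq_mul_coroot hβ, hφ]
    _ = D.lengthProduct β * y β := by
      rw [two_mul_Bd_coroot_eq_mul_apply hβ, lengthProduct, mul_assoc]
    _ = (c • LinearMap.id : Module.Dual ℝ V →ₗ[ℝ] Module.Dual ℝ V) y β := by simp [hc β hβ]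

end RootSystemData

theorem stmt3_general {V : Type} [AddCommGroup V] [Module ℝ V] [FiniteDimensional ℝ V]
    (D : RootSystemData V) (hirr : D.IsIrreducible)
    (hnormV : D.NormalizedPrimal)
    (φ : Module.Dual ℝ V →ₗ[ℝ] V)
    (hφ : ∀ x y : Module.Dual ℝ V, x (φ y) = 2 * D.Bd x y)
    (φv : V →ₗ[ℝ] Module.Dual ℝ V)
    (hφv : ∀ x y : V, φv x y = 2 * D.B x y) :
    ∀ α, D.ShortRoot α →
      φ.comp φv = D.Bd (D.coroot α) (D.coroot α) • (LinearMap.id : V →ₗ[ℝ] V) ∧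
      φv.comp φ = D.Bd (D.coroot α) (D.coroot α) •
        (LinearMap.id : Module.Dual ℝ V →ₗ[ℝ] Module.Dual ℝ V) := by
  intro α hα
  have hlength : ∀ β ∈ D.roots, D.lengthProduct β = D.Bd (D.coroot α) (D.coroot α) := by
    intro β hβ
    rw [hirr.lengthProduct_eq hβ hα.1, RootSystemData.lengthProduct, hnormV α hα, one_mul]
  have hdual := RootSystemData.comp_eq_smul_id_of_lengthProduct_eq hφ hφv hlength
  have hsurj : Function.Surjective φ :=
    (LinearMap.injective_iff_surjective_of_finrank_eq_finrank Subspace.dual_finrank_eq).mp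
      (LinearMap.injective_of_comp_eq_smul_id
        (RootSystemData.Bd_coroot_self_pos hα.1).ne' hdual)
  exact ⟨LinearMap.comp_eq_smul_id_of_surjective hsurj hdual, hdual⟩

/-- If `R` is irreducible, then `φ ∘ φ∨ : V → V` and
`φ∨ ∘ φ : V* → V*` are both multiplication by `d_α`, the square-length of the
coroot of a short root `α`. -/
theorem stmt3 {V : Type} [AddCommGroup V] [Module ℝ V] [FiniteDimensional ℝ V]
    (D : RootSystemData V) (hirr : D.IsIrreducible)
    (hnormV : D.NormalizedPrimal) (hnormVd : D.NormalizedDual)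
    (φ : Module.Dual ℝ V →ₗ[ℝ] V)
    (hφ : ∀ x y : Module.Dual ℝ V, x (φ y) = 2 * D.Bd x y)
    (φv : V →ₗ[ℝ] Module.Dual ℝ V)
    (hφv : ∀ x y : V, φv x y = 2 * D.B x y) :
    ∀ α, D.ShortRoot α →
      φ.comp φv = D.Bd (D.coroot α) (D.coroot α) • (LinearMap.id : V →ₗ[ℝ] V) ∧
      φv.comp φ = D.Bd (D.coroot α) (D.coroot α) •
        (LinearMap.id : Module.Dual ℝ V →ₗ[ℝ] Module.Dual ℝ V) :=
  stmt3_general D hirr hnormV φ hφ φv hφv
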